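/- Let γ ∈ (1/2,1), κ ∈ (0,1) with γ(κ+1) < 1, and η with (1-γ(1+κ))/γ < η < 1-κ. Let α satisfy 1-γ < α < γ(κ+η). Let T > 0, 0 ≤ t₁ < t₂ ≤ T, y ∈ C^γ([0,T]; ℝ^m) with ∫_0^T |y_s|^{-η/(γ(κ+η))} ds < ∞, and σ: ℝ^m → ℝ^m with σ(0)=0 and |σ(ξ₂)-σ(ξ₁)| ≤ N||ξ₂|^κ-|ξ₁|^κ|. Then the quantity J² := ∫_{t₁}^{t₂} (∫_{t₁}^{s} |σ(y_s)-σ(y_u)|/(s-u)^{α+1} du)·(t₂-s)^{α+γ-1} ds satisfies J² ≤ c·N·‖y‖_γ^{κ+η}·(∫_0^T |y_s|^{-η/(γ(κ+η))} ds)^{γ(κ+η)}·(t₂-t₁)^γ, for a constant c depending only on α, γ, κ, η. -/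

import Mathlib

/-!
The interpolation inequality `|a ^ κ - b ^ κ| ≤ (a ^ (-η) + b ^ (-η)) * |a - b| ^ (κ + η)` and the
Hölder bound `‖y v - y u‖ ≤ M * |v - u| ^ γ` bound the inner integrand by
`N * M ^ (κ + η) * (w s + w u) * (s - u) ^ (β - α - 1)`, where `w = ‖y ·‖ ^ (-η)` and
`β = γ * (κ + η)`. Since `α < β` this kernel is integrable: integrating it out (in `u` for the
`w s` term, in `s` after Fubini for the `w u` term) leaves
`2 * (t₂ - t₁) ^ (β - α) / (β - α) * ∫_{t₁}^{t₂} w`, and Hölder's inequality with exponent `1 / β`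
bounds `∫_{t₁}^{t₂} w` by `(∫_0^T ‖y‖ ^ (-η / β)) ^ β * (t₂ - t₁) ^ (1 - β)`. The exponents of
`t₂ - t₁` add up to `γ`.

All estimates are carried out for lower Lebesgue integrals, so that no integrability of the
singular integrands is ever needed: a non-integrable Bochner integral is `0`.
-/

open Real Set MeasureTheory intervalIntegral
open scoped ENNReal

theorem rpow_sub_rpow_le_of_pos {κ η a b : ℝ} (hκ : 0 < κ) (hη : 0 ≤ η) (hκη : κ + η ≤ 1)
    (hb : 0 < b) (hba : b ≤ a) :
    a ^ κ - b ^ κ ≤ b ^ (-η) * (a - b) ^ (κ + η) := by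
  have hab : 0 ≤ a - b := sub_nonneg.mpr hba
  rcases le_total (a - b) b with hsmall | hlarge
  · have hconc : a ^ κ ≤ b ^ (κ - 1) * a := by
      have h := rpow_le_self_of_one_le ((one_le_div hb).mpr hba) (show κ ≤ 1 by linarith)
      rw [div_rpow (hb.le.trans hba) hb.le, div_le_div_iff₀ (by positivity) hb] at h
      rw [rpow_sub hb, rpow_one]
      field_simp
      linarith
    have hsplit : a - b = (a - b) ^ (κ + η) * (a - b) ^ (1 - (κ + η)) := by
      rw [← rpow_add' hab (by norm_num), add_sub_cancel, rpow_one]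
    calc a ^ κ - b ^ κ ≤ b ^ (κ - 1) * (a - b) := by
          rw [mul_sub, ← rpow_add_one hb.ne']; simpa using hconc
      _ ≤ b ^ (κ - 1) * ((a - b) ^ (κ + η) * b ^ (1 - (κ + η))) := by
          rw [hsplit]
          gcongr
          linarith
      _ = b ^ (-η) * (a - b) ^ (κ + η) := by
          rw [mul_left_comm, ← rpow_add hb]; ring_nf
  · have hpos : 0 < a - b := hb.trans_le hlarge
    have hsubadd : a ^ κ ≤ (a - b) ^ κ + b ^ κ := by
      simpa using rpow_add_le_add_rpow hab hb.le hκ.le (by linarith)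
    calc a ^ κ - b ^ κ ≤ (a - b) ^ (κ + η) * (a - b) ^ (-η) := by
          rw [← rpow_add hpos]; simpa using hsubadd
      _ ≤ (a - b) ^ (κ + η) * b ^ (-η) := by
          exact mul_le_mul_of_nonneg_left (rpow_le_rpow_of_nonpos hb hlarge (by linarith))
            (rpow_nonneg hab _)
      _ = b ^ (-η) * (a - b) ^ (κ + η) := mul_comm _ _

theorem rpow_sub_rpow_le {κ η a b : ℝ} (hκ : 0 < κ) (hη : 0 ≤ η) (hκη : κ + η ≤ 1)
    (hb : 0 ≤ b) (hba : b ≤ a) :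
    a ^ κ - b ^ κ ≤ (a ^ (-η) + b ^ (-η)) * (a - b) ^ (κ + η) := by
  rcases hb.eq_or_lt with rfl | hb
  · have hsplit : a ^ κ = a ^ (-η) * a ^ (κ + η) := by
      rw [← rpow_add' hba (by linarith)]; ring_nf
    rw [zero_rpow hκ.ne', sub_zero, sub_zero, hsplit]
    gcongr
    exact le_add_of_nonneg_right (rpow_nonneg le_rfl _)
  · calc a ^ κ - b ^ κ ≤ b ^ (-η) * (a - b) ^ (κ + η) :=
          rpow_sub_rpow_le_of_pos hκ hη hκη hb hba
      _ ≤ (a ^ (-η) + b ^ (-η)) * (a - b) ^ (κ + η) := by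
          gcongr
          exact le_add_of_nonneg_left (rpow_nonneg (hb.le.trans hba) _)

theorem abs_rpow_sub_rpow_le {κ η a b : ℝ} (hκ : 0 < κ) (hη : 0 ≤ η) (hκη : κ + η ≤ 1)
    (ha : 0 ≤ a) (hb : 0 ≤ b) :
    |a ^ κ - b ^ κ| ≤ (a ^ (-η) + b ^ (-η)) * |a - b| ^ (κ + η) := by
  rcases le_total b a with hba | hab
  · rw [abs_of_nonneg (sub_nonneg.mpr (rpow_le_rpow hb hba hκ.le)),
      abs_of_nonneg (sub_nonneg.mpr hba)]
    exact rpow_sub_rpow_le hκ hη hκη hb hba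
  · rw [abs_sub_comm, abs_of_nonneg (sub_nonneg.mpr (rpow_le_rpow ha hab hκ.le)),
      abs_sub_comm, abs_of_nonneg (sub_nonneg.mpr hab), add_comm]
    exact rpow_sub_rpow_le hκ hη hκη ha hab

theorem norm_sub_le_of_norm_sub_le_abs_rpow_sub {E F : Type*} [SeminormedAddCommGroup E]
    [SeminormedAddCommGroup F] {σ : E → F} {N κ η : ℝ} (hN : 0 ≤ N) (hκ : 0 < κ) (hη : 0 ≤ η)
    (hκη : κ + η ≤ 1) (hσ : ∀ ξ₁ ξ₂, ‖σ ξ₂ - σ ξ₁‖ ≤ N * |‖ξ₂‖ ^ κ - ‖ξ₁‖ ^ κ|) (ξ₁ ξ₂ : E) :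
    ‖σ ξ₂ - σ ξ₁‖ ≤ N * (‖ξ₂‖ ^ (-η) + ‖ξ₁‖ ^ (-η)) * ‖ξ₂ - ξ₁‖ ^ (κ + η) := by
  calc ‖σ ξ₂ - σ ξ₁‖ ≤ N * |‖ξ₂‖ ^ κ - ‖ξ₁‖ ^ κ| := hσ ξ₁ ξ₂
    _ ≤ N * ((‖ξ₂‖ ^ (-η) + ‖ξ₁‖ ^ (-η)) * |‖ξ₂‖ - ‖ξ₁‖| ^ (κ + η)) := by
        gcongr
        exact abs_rpow_sub_rpow_le hκ hη hκη (norm_nonneg _) (norm_nonneg _)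
    _ ≤ N * (‖ξ₂‖ ^ (-η) + ‖ξ₁‖ ^ (-η)) * ‖ξ₂ - ξ₁‖ ^ (κ + η) := by
        rw [← mul_assoc]
        gcongr
        exact abs_norm_sub_norm_le _ _

theorem norm_sub_div_rpow_le_of_holder {E F : Type*} [SeminormedAddCommGroup E]
    [SeminormedAddCommGroup F] {σ : E → F} {y : ℝ → E} {N M κ η γ α s u : ℝ} (hN : 0 ≤ N)
    (hM : 0 ≤ M) (hκ : 0 < κ) (hη : 0 ≤ η) (hκη : κ + η ≤ 1)
    (hσ : ∀ ξ₁ ξ₂, ‖σ ξ₂ - σ ξ₁‖ ≤ N * |‖ξ₂‖ ^ κ - ‖ξ₁‖ ^ κ|) (hus : u ≤ s)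
    (hy : ‖y s - y u‖ ≤ M * |s - u| ^ γ) :
    ‖σ (y s) - σ (y u)‖ / (s - u) ^ (α + 1) ≤
      N * M ^ (κ + η) * (‖y s‖ ^ (-η) + ‖y u‖ ^ (-η)) * (s - u) ^ (γ * (κ + η) - α - 1) := by
  rcases hus.eq_or_lt with rfl | hus
  · simp only [sub_self, norm_zero, zero_div]
    positivity
  have hd : 0 < s - u := sub_pos.mpr hus
  rw [abs_of_pos hd] at hy
  rw [div_le_iff₀ (rpow_pos_of_pos hd _)]
  calc ‖σ (y s) - σ (y u)‖
      ≤ N * (‖y s‖ ^ (-η) + ‖y u‖ ^ (-η)) * ‖y s - y u‖ ^ (κ + η) :=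
        norm_sub_le_of_norm_sub_le_abs_rpow_sub hN hκ hη hκη hσ _ _
    _ ≤ N * (‖y s‖ ^ (-η) + ‖y u‖ ^ (-η)) * (M * (s - u) ^ γ) ^ (κ + η) := by
        gcongr
    _ = N * M ^ (κ + η) * (‖y s‖ ^ (-η) + ‖y u‖ ^ (-η)) * (s - u) ^ (γ * (κ + η) - α - 1) *
          (s - u) ^ (α + 1) := by
        rw [mul_rpow hM (rpow_nonneg hd.le _), ← rpow_mul hd.le, mul_assoc _ ((s - u) ^ _),
          ← rpow_add hd, sub_sub, sub_add_cancel]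
        ring

theorem ofReal_integral_le_lintegral_ofReal {α : Type*} [MeasurableSpace α] (μ : Measure α)
    (f : α → ℝ) : ENNReal.ofReal (∫ x, f x ∂μ) ≤ ∫⁻ x, ENNReal.ofReal (f x) ∂μ := by
  by_cases hf : Integrable f μ
  · refine (ENNReal.ofReal_le_ofReal ?_).trans ENNReal.ofReal_toReal_le
    rw [integral_eq_lintegral_pos_part_sub_lintegral_neg_part hf]
    exact sub_le_self _ ENNReal.toReal_nonneg
  · simp [integral_undef hf]

theorem lintegral_rpow_le_lintegral_rpow_mul_measure_univ {α : Type*} [MeasurableSpace α]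
    (μ : Measure α) {f : α → ℝ≥0∞} (hf : AEMeasurable f μ) {p : ℝ} (hp₀ : 0 < p) (hp₁ : p < 1) :
    ∫⁻ x, f x ^ p ∂μ ≤ (∫⁻ x, f x ∂μ) ^ p * μ univ ^ (1 - p) := by
  have hpq : (1 / p).HolderConjugate (1 / (1 - p)) :=
    Real.holderConjugate_iff.mpr ⟨by rw [lt_one_div one_pos hp₀]; simpa using hp₁, by simp⟩
  have h := ENNReal.lintegral_mul_le_Lp_mul_Lq μ hpq (hf.pow_const p)
    (aemeasurable_const (b := (1 : ℝ≥0∞)))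
  simpa only [Pi.mul_apply, mul_one, ENNReal.one_rpow, lintegral_const, one_mul, one_div_one_div,
    ← ENNReal.rpow_mul, mul_one_div_cancel hp₀.ne', ENNReal.rpow_one] using h

theorem lintegral_Ioc_ofReal_sub_rpow {a b e : ℝ} (hab : a ≤ b) (he : -1 < e) :
    ∫⁻ u in Ioc a b, ENNReal.ofReal ((b - u) ^ e) =
      ENNReal.ofReal ((b - a) ^ (e + 1) / (e + 1)) := by
  have hint : IntervalIntegrable (fun u => (b - u) ^ e) volume a b := by
    simpa using (intervalIntegrable_rpow' (a := b - b) (b := b - a) he).comp_sub_left b |>.symm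
  rw [← ofReal_integral_eq_lintegral_ofReal
      ((intervalIntegrable_iff_integrableOn_Ioc_of_le hab).mp hint)
      (ae_restrict_of_forall_mem measurableSet_Ioc fun u hu => rpow_nonneg (by linarith [hu.2]) _),
    ← intervalIntegral.integral_of_le hab, integral_comp_sub_left (fun x => x ^ e) b,
    integral_rpow (Or.inl he), sub_self, zero_rpow (by linarith), sub_zero]

theorem lintegral_Ioc_ofReal_rpow_sub {a b e : ℝ} (hab : a ≤ b) (he : -1 < e) :
    ∫⁻ s in Ioc a b, ENNReal.ofReal ((s - a) ^ e) =
      ENNReal.ofReal ((b - a) ^ (e + 1) / (e + 1)) := by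
  have hint : IntervalIntegrable (fun s => (s - a) ^ e) volume a b := by
    simpa using (intervalIntegrable_rpow' (a := a - a) (b := b - a) he).comp_sub_right a
  rw [← ofReal_integral_eq_lintegral_ofReal
      ((intervalIntegrable_iff_integrableOn_Ioc_of_le hab).mp hint)
      (ae_restrict_of_forall_mem measurableSet_Ioc fun s hs => rpow_nonneg (by linarith [hs.1]) _),
    ← intervalIntegral.integral_of_le hab, integral_comp_sub_right (fun x => x ^ e) a,
    integral_rpow (Or.inl he), sub_self, zero_rpow (by linarith), sub_zero]

theorem lintegral_Ioc_lintegral_Ioc_swap {a b : ℝ} {W : ℝ → ℝ≥0∞} {K : ℝ → ℝ → ℝ≥0∞}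
    (hW : AEMeasurable W (volume.restrict (Ioc a b))) (hK : Measurable (Function.uncurry K)) :
    ∫⁻ s in Ioc a b, ∫⁻ u in Ioc a s, W u * K s u =
      ∫⁻ u in Ioc a b, W u * ∫⁻ s in Icc u b, K s u := by
  set F : ℝ → ℝ → ℝ≥0∞ := fun s u =>
    {p : ℝ × ℝ | p.2 ≤ p.1}.indicator (fun p => W p.2 * K p.1 p.2) (s, u)
  have hF : AEMeasurable (Function.uncurry F)
      ((volume.restrict (Ioc a b)).prod (volume.restrict (Ioc a b))) :=
    (hW.comp_snd.mul hK.aemeasurable).indicator (measurableSet_le measurable_snd measurable_fst)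
  calc ∫⁻ s in Ioc a b, ∫⁻ u in Ioc a s, W u * K s u
      = ∫⁻ s in Ioc a b, ∫⁻ u in Ioc a b, F s u := by
        refine setLIntegral_congr_fun measurableSet_Ioc fun s hs => ?_
        have hFs : F s = (Iic s).indicator fun u => W u * K s u := by
          ext u; simp [F, indicator_apply]
        rw [hFs, lintegral_indicator measurableSet_Iic, Measure.restrict_restrict measurableSet_Iic,
          Iic_inter_Ioc_of_le hs.2]
    _ = ∫⁻ u in Ioc a b, ∫⁻ s in Ioc a b, F s u := lintegral_lintegral_swap hF
    _ = ∫⁻ u in Ioc a b, W u * ∫⁻ s in Icc u b, K s u := by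
        refine setLIntegral_congr_fun measurableSet_Ioc fun u hu => ?_
        have hFu : (fun s => F s u) = (Ici u).indicator fun s => W u * K s u := by
          ext s; simp [F, indicator_apply]
        have hslice : Ici u ∩ Ioc a b = Icc u b := by
          ext s
          simp only [mem_inter_iff, mem_Ici, mem_Ioc, mem_Icc]
          exact ⟨fun h => ⟨h.1, h.2.2⟩, fun h => ⟨h.1, hu.1.trans_le h.1, h.2⟩⟩
        rw [hFu, lintegral_indicator measurableSet_Ici, Measure.restrict_restrict measurableSet_Ici,
          hslice]
        exact lintegral_const_mul _ (hK.comp measurable_prodMk_right)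

theorem lintegral_Ioc_lintegral_Ioc_add_mul_rpow_sub_le {a b e : ℝ} (he : -1 < e)
    {W : ℝ → ℝ≥0∞} (hW : AEMeasurable W (volume.restrict (Ioc a b))) :
    ∫⁻ s in Ioc a b, ∫⁻ u in Ioc a s, (W s + W u) * ENNReal.ofReal ((s - u) ^ e) ≤
      2 * ENNReal.ofReal ((b - a) ^ (e + 1) / (e + 1)) * ∫⁻ u in Ioc a b, W u := by
  set C := ENNReal.ofReal ((b - a) ^ (e + 1) / (e + 1))
  have hC : ∀ x y, a ≤ x → x ≤ y → y ≤ b → ENNReal.ofReal ((y - x) ^ (e + 1) / (e + 1)) ≤ C := by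
    intro x y hx hxy hy
    refine ENNReal.ofReal_le_ofReal (div_le_div_of_nonneg_right ?_ (by linarith))
    exact rpow_le_rpow (by linarith) (by linarith) (by linarith)
  have hK : Measurable (Function.uncurry fun s u : ℝ => ENNReal.ofReal ((s - u) ^ e)) := by
    fun_prop
  have hKs (s : ℝ) : Measurable fun u : ℝ => ENNReal.ofReal ((s - u) ^ e) := by fun_prop
  have hdiag : ∀ s ∈ Ioc a b,
      ∫⁻ u in Ioc a s, (W s + W u) * ENNReal.ofReal ((s - u) ^ e) ≤
        W s * C + ∫⁻ u in Ioc a s, W u * ENNReal.ofReal ((s - u) ^ e) := by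
    intro s hs
    simp_rw [add_mul]
    rw [lintegral_add_left ((hKs s).const_mul _), lintegral_const_mul _ (hKs s),
      lintegral_Ioc_ofReal_sub_rpow hs.1.le he]
    gcongr
    exact hC a s le_rfl hs.1.le hs.2
  have hoff : ∫⁻ s in Ioc a b, ∫⁻ u in Ioc a s, W u * ENNReal.ofReal ((s - u) ^ e) ≤
      ∫⁻ u in Ioc a b, W u * C := by
    rw [lintegral_Ioc_lintegral_Ioc_swap hW hK]
    refine setLIntegral_mono' measurableSet_Ioc fun u hu => ?_
    rw [setLIntegral_congr Ioc_ae_eq_Icc.symm, lintegral_Ioc_ofReal_rpow_sub hu.2 he]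
    gcongr
    exact hC u b hu.1.le hu.2 le_rfl
  calc ∫⁻ s in Ioc a b, ∫⁻ u in Ioc a s, (W s + W u) * ENNReal.ofReal ((s - u) ^ e)
      ≤ ∫⁻ s in Ioc a b, (W s * C + ∫⁻ u in Ioc a s, W u * ENNReal.ofReal ((s - u) ^ e)) :=
        setLIntegral_mono' measurableSet_Ioc hdiag
    _ ≤ (∫⁻ s in Ioc a b, W s * C) + ∫⁻ u in Ioc a b, W u * C := by
        rw [lintegral_add_left' (hW.mul_const C)]
        exact add_le_add le_rfl hoff
    _ = 2 * C * ∫⁻ u in Ioc a b, W u := by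
        rw [← two_mul, lintegral_mul_const' _ _ ENNReal.ofReal_ne_top]
        ring

theorem ofReal_integral_integral_mul_rpow_le {f : ℝ → ℝ → ℝ} {w : ℝ → ℝ} {a b e θ C : ℝ}
    (hab : a ≤ b) (hθ : 0 ≤ θ) (hC : 0 ≤ C) (hw : ∀ x, 0 ≤ w x)
    (hf : ∀ s ∈ Ioc a b, ∀ u ∈ Ioc a s, f s u ≤ C * (w s + w u) * (s - u) ^ e) :
    ENNReal.ofReal (∫ s in a..b, (∫ u in a..s, f s u) * (b - s) ^ θ) ≤
      ENNReal.ofReal (C * (b - a) ^ θ) *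
        ∫⁻ s in Ioc a b, ∫⁻ u in Ioc a s,
          (ENNReal.ofReal (w s) + ENNReal.ofReal (w u)) * ENNReal.ofReal ((s - u) ^ e) := by
  rw [intervalIntegral.integral_of_le hab, ← lintegral_const_mul' _ _ ENNReal.ofReal_ne_top]
  refine (ofReal_integral_le_lintegral_ofReal _ _).trans
    (setLIntegral_mono' measurableSet_Ioc fun s hs => ?_)
  have hinner : ENNReal.ofReal (∫ u in a..s, f s u) ≤ ENNReal.ofReal C *
      ∫⁻ u in Ioc a s,
        (ENNReal.ofReal (w s) + ENNReal.ofReal (w u)) * ENNReal.ofReal ((s - u) ^ e) := by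
    rw [intervalIntegral.integral_of_le hs.1.le, ← lintegral_const_mul' _ _ ENNReal.ofReal_ne_top]
    refine (ofReal_integral_le_lintegral_ofReal _ _).trans
      (setLIntegral_mono' measurableSet_Ioc fun u hu => ?_)
    calc ENNReal.ofReal (f s u) ≤ ENNReal.ofReal (C * (w s + w u) * (s - u) ^ e) :=
          ENNReal.ofReal_le_ofReal (hf s hs u hu)
      _ = _ := by
          rw [ENNReal.ofReal_mul (mul_nonneg hC (add_nonneg (hw s) (hw u))), ENNReal.ofReal_mul hC,
            ENNReal.ofReal_add (hw s) (hw u), mul_assoc]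
  calc ENNReal.ofReal ((∫ u in a..s, f s u) * (b - s) ^ θ)
      = ENNReal.ofReal (∫ u in a..s, f s u) * ENNReal.ofReal ((b - s) ^ θ) :=
        ENNReal.ofReal_mul' (rpow_nonneg (by linarith [hs.2]) _)
    _ ≤ (ENNReal.ofReal C * ∫⁻ u in Ioc a s,
          (ENNReal.ofReal (w s) + ENNReal.ofReal (w u)) * ENNReal.ofReal ((s - u) ^ e)) *
          ENNReal.ofReal ((b - a) ^ θ) := by
        gcongr <;> linarith [hs.1, hs.2]
    _ = _ := by rw [ENNReal.ofReal_mul hC]; ring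

theorem lintegral_Ioc_ofReal_rpow_le {g : ℝ → ℝ} {a b c d p : ℝ} (hg : ∀ x, 0 ≤ g x)
    (hgi : IntervalIntegrable g volume c d) (hca : c ≤ a) (hab : a ≤ b) (hbd : b ≤ d)
    (hp₀ : 0 < p) (hp₁ : p < 1) :
    ∫⁻ x in Ioc a b, ENNReal.ofReal (g x ^ p) ≤
      ENNReal.ofReal ((∫ x in c..d, g x) ^ p * (b - a) ^ (1 - p)) := by
  have hcd : c ≤ d := (hca.trans hab).trans hbd
  have hint : IntegrableOn g (Ioc c d) := (intervalIntegrable_iff_integrableOn_Ioc_of_le hcd).mp hgi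
  have hsub : Ioc a b ⊆ Ioc c d := Ioc_subset_Ioc hca hbd
  have hI : 0 ≤ ∫ x in c..d, g x := intervalIntegral.integral_nonneg hcd fun x _ => hg x
  calc ∫⁻ x in Ioc a b, ENNReal.ofReal (g x ^ p)
      = ∫⁻ x in Ioc a b, ENNReal.ofReal (g x) ^ p := by
        simp_rw [ENNReal.ofReal_rpow_of_nonneg (hg _) hp₀.le]
    _ ≤ (∫⁻ x in Ioc a b, ENNReal.ofReal (g x)) ^ p * volume (Ioc a b) ^ (1 - p) := by
        simpa only [Measure.restrict_apply_univ] using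
          lintegral_rpow_le_lintegral_rpow_mul_measure_univ _
            (hint.mono_set hsub).aemeasurable.ennreal_ofReal hp₀ hp₁
    _ ≤ (∫⁻ x in Ioc c d, ENNReal.ofReal (g x)) ^ p * ENNReal.ofReal (b - a) ^ (1 - p) := by
        rw [Real.volume_Ioc]
        gcongr
    _ = ENNReal.ofReal ((∫ x in c..d, g x) ^ p * (b - a) ^ (1 - p)) := by
        rw [← ofReal_integral_eq_lintegral_ofReal hint (ae_of_all _ hg),
          ← intervalIntegral.integral_of_le hcd,
          ENNReal.ofReal_rpow_of_nonneg hI hp₀.le,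
          ENNReal.ofReal_rpow_of_nonneg (by linarith) (by linarith),
          ← ENNReal.ofReal_mul (rpow_nonneg hI _)]

theorem ofReal_integral_le_of_holder {E F : Type*} [SeminormedAddCommGroup E]
    [SeminormedAddCommGroup F] {σ : E → F} {y : ℝ → E} {N M κ η γ α a b c d : ℝ} (hN : 0 ≤ N)
    (hM : 0 ≤ M) (hκ : 0 < κ) (hη : 0 ≤ η) (hκη : κ + η ≤ 1) (hβ₀ : 0 < γ * (κ + η))
    (hβ₁ : γ * (κ + η) < 1) (hαβ : α < γ * (κ + η)) (hαγ : 1 - γ ≤ α)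
    (hca : c ≤ a) (hab : a ≤ b) (hbd : b ≤ d)
    (hσ : ∀ ξ₁ ξ₂, ‖σ ξ₂ - σ ξ₁‖ ≤ N * |‖ξ₂‖ ^ κ - ‖ξ₁‖ ^ κ|)
    (hy : ∀ u ∈ Icc a b, ∀ v ∈ Icc a b, ‖y v - y u‖ ≤ M * |v - u| ^ γ)
    (hyint : IntervalIntegrable (fun s => ‖y s‖ ^ (-(η / (γ * (κ + η))))) volume c d) :
    ENNReal.ofReal (∫ s in a..b,
        (∫ u in a..s, ‖σ (y s) - σ (y u)‖ / (s - u) ^ (α + 1)) * (b - s) ^ (α + γ - 1)) ≤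
      ENNReal.ofReal (N * M ^ (κ + η) * (b - a) ^ (α + γ - 1)) *
        (2 * ENNReal.ofReal ((b - a) ^ (γ * (κ + η) - α) / (γ * (κ + η) - α)) *
          ENNReal.ofReal ((∫ s in c..d, ‖y s‖ ^ (-(η / (γ * (κ + η))))) ^ (γ * (κ + η)) *
            (b - a) ^ (1 - γ * (κ + η)))) := by
  have hpt : ∀ s ∈ Ioc a b, ∀ u ∈ Ioc a s,
      ‖σ (y s) - σ (y u)‖ / (s - u) ^ (α + 1) ≤ N * M ^ (κ + η) *
        (‖y s‖ ^ (-η) + ‖y u‖ ^ (-η)) * (s - u) ^ (γ * (κ + η) - α - 1) := fun s hs u hu =>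
    norm_sub_div_rpow_le_of_holder hN hM hκ hη hκη hσ hu.2
      (hy u ⟨hu.1.le, hu.2.trans hs.2⟩ s ⟨hs.1.le, hs.2⟩)
  have hw (x : ℝ) : ‖y x‖ ^ (-η) = (‖y x‖ ^ (-(η / (γ * (κ + η))))) ^ (γ * (κ + η)) := by
    rw [← rpow_mul (norm_nonneg _), neg_mul, div_mul_cancel₀ _ hβ₀.ne']
  have hW : AEMeasurable (fun x => ENNReal.ofReal (‖y x‖ ^ (-η))) (volume.restrict (Ioc a b)) := by
    simp_rw [hw]
    exact (((intervalIntegrable_iff_integrableOn_Ioc_of_le ((hca.trans hab).trans hbd)).mp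
      hyint).mono_set (Ioc_subset_Ioc hca hbd)).aemeasurable.pow_const _ |>.ennreal_ofReal
  calc _ ≤ ENNReal.ofReal (N * M ^ (κ + η) * (b - a) ^ (α + γ - 1)) *
          ∫⁻ s in Ioc a b, ∫⁻ u in Ioc a s, (ENNReal.ofReal (‖y s‖ ^ (-η)) +
            ENNReal.ofReal (‖y u‖ ^ (-η))) * ENNReal.ofReal ((s - u) ^ (γ * (κ + η) - α - 1)) :=
        ofReal_integral_integral_mul_rpow_le hab (by linarith) (by positivity)
          (fun _ => rpow_nonneg (norm_nonneg _) _) hpt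
    _ ≤ ENNReal.ofReal (N * M ^ (κ + η) * (b - a) ^ (α + γ - 1)) *
          (2 * ENNReal.ofReal ((b - a) ^ (γ * (κ + η) - α) / (γ * (κ + η) - α)) *
            ∫⁻ u in Ioc a b, ENNReal.ofReal (‖y u‖ ^ (-η))) := by
        gcongr
        simpa only [sub_add_cancel] using
          lintegral_Ioc_lintegral_Ioc_add_mul_rpow_sub_le (e := γ * (κ + η) - α - 1)
            (by linarith) hW
    _ ≤ _ := by
        gcongr
        simp_rw [hw]
        exact lintegral_Ioc_ofReal_rpow_le (fun _ => rpow_nonneg (norm_nonneg _) _) hyint hca hab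
          hbd hβ₀ hβ₁

theorem integral_le_of_holder {E F : Type*} [SeminormedAddCommGroup E]
    [SeminormedAddCommGroup F] {σ : E → F} {y : ℝ → E} {N M κ η γ α a b c d : ℝ} (hN : 0 ≤ N)
    (hM : 0 ≤ M) (hκ : 0 < κ) (hη : 0 ≤ η) (hκη : κ + η ≤ 1) (hβ₀ : 0 < γ * (κ + η))
    (hβ₁ : γ * (κ + η) < 1) (hαβ : α < γ * (κ + η)) (hαγ : 1 - γ ≤ α)
    (hca : c ≤ a) (hab : a < b) (hbd : b ≤ d)
    (hσ : ∀ ξ₁ ξ₂, ‖σ ξ₂ - σ ξ₁‖ ≤ N * |‖ξ₂‖ ^ κ - ‖ξ₁‖ ^ κ|)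
    (hy : ∀ u ∈ Icc a b, ∀ v ∈ Icc a b, ‖y v - y u‖ ≤ M * |v - u| ^ γ)
    (hyint : IntervalIntegrable (fun s => ‖y s‖ ^ (-(η / (γ * (κ + η))))) volume c d) :
    (∫ s in a..b,
        (∫ u in a..s, ‖σ (y s) - σ (y u)‖ / (s - u) ^ (α + 1)) * (b - s) ^ (α + γ - 1)) ≤
      2 / (γ * (κ + η) - α) * N * M ^ (κ + η) *
        (∫ s in c..d, ‖y s‖ ^ (-(η / (γ * (κ + η))))) ^ (γ * (κ + η)) * (b - a) ^ γ := by
  have hI : 0 ≤ ∫ s in c..d, ‖y s‖ ^ (-(η / (γ * (κ + η)))) :=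
    intervalIntegral.integral_nonneg ((hca.trans hab.le).trans hbd)
      fun _ _ => rpow_nonneg (norm_nonneg _) _
  have hβα : 0 < γ * (κ + η) - α := sub_pos.mpr hαβ
  have h := ofReal_integral_le_of_holder hN hM hκ hη hκη hβ₀ hβ₁ hαβ hαγ hca hab.le hbd hσ hy hyint
  have hd : 0 < b - a := sub_pos.mpr hab
  generalize b - a = δ at hd h ⊢
  generalize ∫ s in c..d, ‖y s‖ ^ (-(η / (γ * (κ + η)))) = I at hI h ⊢
  rw [← ENNReal.ofReal_le_ofReal_iff (by positivity)]
  refine h.trans_eq ?_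
  rw [← ENNReal.ofReal_ofNat 2, ← ENNReal.ofReal_mul zero_le_two,
    ← ENNReal.ofReal_mul (by positivity), ← ENNReal.ofReal_mul (by positivity)]
  congr 1
  have hpow : δ ^ (α + γ - 1) * δ ^ (γ * (κ + η) - α) * δ ^ (1 - γ * (κ + η)) = δ ^ γ := by
    rw [← rpow_add hd, ← rpow_add hd]
    ring_nf
  rw [← hpow]
  ring

theorem stmt13 (γ κ η α : ℝ)
    (hγ : γ ∈ Ioo (1/2 : ℝ) 1) (hκ : κ ∈ Ioo (0:ℝ) 1)
    (hκγ : γ * (κ + 1) < 1)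
    (hη : η ∈ Ioo ((1 - γ * (1 + κ)) / γ) (1 - κ))
    (hα : α ∈ Ioo (1 - γ) (γ * (κ + η))) :
    ∃ c > 0, ∀ (m : ℕ) (T t₁ t₂ : ℝ), 0 < T → 0 ≤ t₁ → t₁ < t₂ → t₂ ≤ T →
      ∀ (y : ℝ → EuclideanSpace ℝ (Fin m))
        (σ : EuclideanSpace ℝ (Fin m) → EuclideanSpace ℝ (Fin m)) (N My : ℝ), 0 < N → 0 ≤ My →
      (∀ u ∈ Icc (0:ℝ) T, ∀ v ∈ Icc (0:ℝ) T, ‖y v - y u‖ ≤ My * |v - u| ^ γ) →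
      σ 0 = 0 →
      (∀ ξ₁ ξ₂ : EuclideanSpace ℝ (Fin m),
        ‖σ ξ₂ - σ ξ₁‖ ≤ N * |‖ξ₂‖ ^ κ - ‖ξ₁‖ ^ κ|) →
      IntervalIntegrable (fun s => ‖y s‖ ^ (-(η / (γ * (κ + η))))) volume 0 T →
      (∫ s in t₁..t₂,
          (∫ u in t₁..s, ‖σ (y s) - σ (y u)‖ / (s - u) ^ (α + 1)) * (t₂ - s) ^ (α + γ - 1))
        ≤ c * N * My ^ (κ + η) *
            (∫ s in (0:ℝ)..T, ‖y s‖ ^ (-(η / (γ * (κ + η))))) ^ (γ * (κ + η)) *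
            (t₂ - t₁) ^ γ := by
  obtain ⟨hγ₀, hγ₁⟩ := hγ
  obtain ⟨hκ₀, -⟩ := hκ
  obtain ⟨hη₀, hη₁⟩ := hη
  obtain ⟨hα₀, hα₁⟩ := hα
  have hη : 0 ≤ η := ((div_pos (by linarith) (by linarith)).trans hη₀).le
  have hβ₀ : 0 < γ * (κ + η) := by linarith
  have hβ₁ : γ * (κ + η) < 1 := by nlinarith
  refine ⟨2 / (γ * (κ + η) - α), div_pos two_pos (by linarith), ?_⟩
  intro m T t₁ t₂ _ ht₁ h₁₂ ht₂ y σ N My hN hMy hy _ hσ hyint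
  exact integral_le_of_holder hN.le hMy hκ₀ hη (by linarith) hβ₀ hβ₁ hα₁ hα₀.le ht₁ h₁₂ ht₂ hσ
    (fun u hu v hv => hy u (Icc_subset_Icc ht₁ ht₂ hu) v (Icc_subset_Icc ht₁ ht₂ hv)) hyint
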